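/- Let S be a compact convex state space with effect set E_S (affine maps S→[0,1]), and let A = (a_x)_{x∈X} be a finite-outcome measurement (∑_x a_x = 1_S). If A is α-sharp (i.e., for all x ≠ x' and all effects b with b ≤ a_x and b ≤ a_{x'}, one has b ≤ (1−α)·1_S) and |X| = n, then A is (1 − (n²−n)(1−α))-intersubjective: every joint measurement B = (b_{x,x'})_{x,x'∈X} of A with itself satisfies ∑_x b_{x,x} ≥ (1 − (n²−n)(1−α))·1_S. -/

import Mathlib

open Finset

/-- An effect on the state space `S`: an affine map taking values in `[0,1]` on `S`. -/
def IsEffect {V : Type*} [AddCommGroup V] [Module ℝ V] (S : Set V) (a : V →ᵃ[ℝ] ℝ) : Prop :=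
  ∀ s ∈ S, 0 ≤ a s ∧ a s ≤ 1

/-- A finite-outcome measurement: a family of effects summing to the unit effect on `S`. -/
def IsMeasurement {V : Type*} [AddCommGroup V] [Module ℝ V] (S : Set V) {X : Type*} [Fintype X]
    (A : X → (V →ᵃ[ℝ] ℝ)) : Prop :=
  (∀ x, IsEffect S (A x)) ∧ ∀ s ∈ S, ∑ x, A x s = 1

/-- A joint measurement of `A` and `B`: a measurement on `X × Y` whose marginals are `A`, `B`. -/
def IsJointMeasurement {V : Type*} [AddCommGroup V] [Module ℝ V] (S : Set V)
    {X Y : Type*} [Fintype X] [Fintype Y]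
    (A : X → (V →ᵃ[ℝ] ℝ)) (B : Y → (V →ᵃ[ℝ] ℝ)) (C : X × Y → (V →ᵃ[ℝ] ℝ)) : Prop :=
  IsMeasurement S C ∧ (∀ x, ∀ s ∈ S, ∑ y, C (x, y) s = A x s) ∧
    (∀ y, ∀ s ∈ S, ∑ x, C (x, y) s = B y s)

/-- `A` is `α`-intersubjective: every joint measurement of `A` with itself has diagonal
weight at least `α · 1_S`. -/
def Intersubjective {V : Type*} [AddCommGroup V] [Module ℝ V] (S : Set V) {X : Type*} [Fintype X]
    (α : ℝ) (A : X → (V →ᵃ[ℝ] ℝ)) : Prop :=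
  ∀ C : X × X → (V →ᵃ[ℝ] ℝ), IsJointMeasurement S A A C → ∀ s ∈ S, α ≤ ∑ x, C (x, x) s

/-- `A` is `α`-sharp: for distinct outcomes `x ≠ x'`, any effect below both `A x` and `A x'`
is below `(1 - α) · 1_S`. -/
def SharpMeasurement {V : Type*} [AddCommGroup V] [Module ℝ V] (S : Set V) {X : Type*} [Fintype X]
    (α : ℝ) (A : X → (V →ᵃ[ℝ] ℝ)) : Prop :=
  ∀ x x', x ≠ x' → ∀ b : V →ᵃ[ℝ] ℝ, IsEffect S b → (∀ s ∈ S, b s ≤ A x s) →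
    (∀ s ∈ S, b s ≤ A x' s) → ∀ s ∈ S, b s ≤ 1 - α

/-! An off-diagonal entry `C (x, x')` of a joint measurement of `A` with itself lies below both
marginals `A x` and `A x'`, so sharpness bounds it by `1 - α`. The `n² - n` off-diagonal entries
therefore carry at most `(n² - n)(1 - α)` of the total weight `1`, and the diagonal carries the
rest. -/

theorem Finset.sum_diag_add_sum_offDiag {ι M : Type*} [DecidableEq ι] [AddCommMonoid M]
    (s : Finset ι) (f : ι × ι → M) :
    ∑ i ∈ s, f (i, i) + ∑ p ∈ s.offDiag, f p = ∑ p ∈ s ×ˢ s, f p := by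
  rw [← sum_diag, ← sum_union (disjoint_diag_offDiag s), diag_union_offDiag]

section

variable {V : Type*} [AddCommGroup V] [Module ℝ V] {S : Set V} {X : Type*} [Fintype X] {s : V}

theorem IsMeasurement.one_sub_le_sum_diag {C : X × X → (V →ᵃ[ℝ] ℝ)} (hC : IsMeasurement S C)
    (hs : s ∈ S) {c : ℝ} (hoff : ∀ x x', x ≠ x' → C (x, x') s ≤ c) :
    1 - ((Fintype.card X : ℝ) ^ 2 - Fintype.card X) * c ≤ ∑ x, C (x, x) s := by
  classical
  have hsum_offDiag :
      ∑ p ∈ univ.offDiag, C p s ≤ ((Fintype.card X : ℝ) ^ 2 - Fintype.card X) * c :=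
    calc ∑ p ∈ univ.offDiag, C p s ≤ #(univ : Finset X).offDiag • c :=
          sum_le_card_nsmul _ _ _ fun p hp => hoff p.1 p.2 (mem_offDiag.1 hp).2.2
      _ = ((Fintype.card X : ℝ) ^ 2 - Fintype.card X) * c := by
          rw [offDiag_card, nsmul_eq_mul, card_univ, Nat.cast_sub (Nat.le_mul_self _)]
          push_cast
          ring
  have hsplit := sum_diag_add_sum_offDiag univ fun p => C p s
  rw [univ_product_univ, hC.2 s hs] at hsplit
  linarith

namespace IsJointMeasurement

variable {Y : Type*} [Fintype Y] {A : X → (V →ᵃ[ℝ] ℝ)} {B : Y → (V →ᵃ[ℝ] ℝ)} {C : X × Y → (V →ᵃ[ℝ] ℝ)}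

theorem apply_le_left (hC : IsJointMeasurement S A B C) (x : X) (y : Y) (hs : s ∈ S) :
    C (x, y) s ≤ A x s := by
  rw [← hC.2.1 x s hs]
  exact single_le_sum (fun y' _ => (hC.1.1 (x, y') s hs).1) (mem_univ y)

theorem apply_le_right (hC : IsJointMeasurement S A B C) (x : X) (y : Y) (hs : s ∈ S) :
    C (x, y) s ≤ B y s := by
  rw [← hC.2.2 y s hs]
  exact single_le_sum (fun x' _ => (hC.1.1 (x', y) s hs).1) (mem_univ x)

theorem apply_le_of_sharp {α : ℝ} {C : X × X → (V →ᵃ[ℝ] ℝ)} (hC : IsJointMeasurement S A A C)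
    (hA : SharpMeasurement S α A) {x x' : X} (hne : x ≠ x') (hs : s ∈ S) :
    C (x, x') s ≤ 1 - α :=
  hA x x' hne _ (hC.1.1 _) (fun _ ht => hC.apply_le_left x x' ht)
    (fun _ ht => hC.apply_le_right x x' ht) s hs

end IsJointMeasurement

end

theorem sharp_implies_intersubjective {V : Type*} [NormedAddCommGroup V] [NormedSpace ℝ V]
    (S : Set V)
    {X : Type*} [Fintype X] {n : ℕ} (hn : Fintype.card X = n)
    (A : X → (V →ᵃ[ℝ] ℝ)) (α : ℝ)
    (hsharp : SharpMeasurement S α A) :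
    Intersubjective S (1 - ((n : ℝ) ^ 2 - n) * (1 - α)) A := by
  rintro C hC s hs
  subst hn
  exact hC.1.one_sub_le_sum_diag hs fun x x' hne => hC.apply_le_of_sharp hsharp hne hs
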